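/- arXiv:1502.00135 — 2 statements merged into one kernel-verified Lean document; each statement's English description precedes it below -/
import Mathlib

section
/- Let z₁, z₂ ∈ R² and r₁ ≥ r₂ > 0 with |z₂ − z₁| > r₁ + r₂ (disjoint discs). Then the measure of the set of affine lines meeting both discs B(z₁,r₁) and B(z₂,r₂) equals 2·f(r₁, r₂, |z₂ − z₁|), where f(r₁,r₂,h) = (r₁+r₂)·arcsin((r₁+r₂)/h) − (r₁−r₂)·arcsin((r₁−r₂)/h) − h·(√(1 − ((r₁−r₂)/h)²) − √(1 − ((r₁+r₂)/h)²)). -/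
/-!
A line `{x | ⟪x, u⟫ = t}` with unit normal `u` meets `B(z, r)` iff `|⟪z, u⟫ - t| ≤ r`, so for a
fixed direction `u` the admissible offsets `t > 0` form the positive part of the intersection of
two intervals of radii `r₁, r₂` centred at `⟪z₁, u⟫` and `⟪z₂, u⟫`. Adding the contributions of
`u` and `-u` recovers the whole intersection, whose length depends only on
`⟪z₂ - z₁, u⟫ = h cos (α - θ)`, where `z₂ - z₁ = h (cos θ, sin θ)`. This length is a piecewise
linear function of `h cos α`, with breakpoints at `α = arccos ((r₁ ± r₂) / h)`, and integrating it
over a quarter turn gives `f`.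
-/

open MeasureTheory Real Set

noncomputable def lineSet (α t : ℝ) : Set (EuclideanSpace ℝ (Fin 2)) :=
  {x | x 0 * Real.cos α + x 1 * Real.sin α = t}

/-- Measure of the set of lines meeting both `A` and `B`. -/
noncomputable def lineMeas₂ (A B : Set (EuclideanSpace ℝ (Fin 2))) : ENNReal :=
  ∫⁻ α in Set.Ico (0:ℝ) (2 * Real.pi), ∫⁻ t in Set.Ioi (0:ℝ),
    Set.indicator {t' : ℝ | (lineSet α t' ∩ A).Nonempty ∧ (lineSet α t' ∩ B).Nonempty}
      (fun _ => (1 : ENNReal)) t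

noncomputable def f (r₁ r₂ h : ℝ) : ℝ :=
  (r₁ + r₂) * Real.arcsin ((r₁ + r₂) / h) - (r₁ - r₂) * Real.arcsin ((r₁ - r₂) / h)
    - h * (Real.sqrt (1 - ((r₁ - r₂) / h) ^ 2) - Real.sqrt (1 - ((r₁ + r₂) / h) ^ 2))

open Metric intervalIntegral
open scoped RealInnerProductSpace

theorem setOf_inner_eq_inter_closedBall_nonempty_iff {E : Type*} [NormedAddCommGroup E]
    [InnerProductSpace ℝ E] {u : E} (hu : ‖u‖ = 1) (z : E) (t r : ℝ) :
    ({x | ⟪x, u⟫ = t} ∩ closedBall z r).Nonempty ↔ |⟪z, u⟫ - t| ≤ r := by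
  constructor
  · rintro ⟨x, hx, hxz⟩
    replace hx : ⟪x, u⟫ = t := hx
    calc |⟪z, u⟫ - t| = |⟪z - x, u⟫| := by rw [inner_sub_left, hx]
      _ ≤ ‖z - x‖ * ‖u‖ := abs_real_inner_le_norm _ _
      _ ≤ r := by rwa [hu, mul_one, ← dist_eq_norm, dist_comm]
  · intro h
    refine ⟨z - (⟪z, u⟫ - t) • u, ?_, ?_⟩
    · simp [inner_sub_left, inner_smul_left, hu]
    · rwa [mem_closedBall, dist_eq_norm, sub_sub_cancel_left, norm_neg, norm_smul, hu, mul_one,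
        Real.norm_eq_abs]

local notation "ℝ²" => EuclideanSpace ℝ (Fin 2)

noncomputable def dir (α : ℝ) : ℝ² := !₂[cos α, sin α]

theorem inner_dir (x : ℝ²) (α : ℝ) : ⟪x, dir α⟫ = x 0 * cos α + x 1 * sin α := by
  simp [dir, PiLp.inner_apply, Fin.sum_univ_two, mul_comm]

theorem inner_dir_dir (α β : ℝ) : ⟪dir α, dir β⟫ = cos (β - α) := by
  rw [inner_dir, cos_sub]
  simp only [dir, Matrix.cons_val_zero, Matrix.cons_val_one, Matrix.cons_val_fin_one]
  ring

theorem norm_dir (α : ℝ) : ‖dir α‖ = 1 := by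
  rw [← pow_eq_one_iff_of_nonneg (norm_nonneg _) two_ne_zero, ← real_inner_self_eq_norm_sq,
    inner_dir_dir, sub_self, cos_zero]

theorem dir_add_pi (α : ℝ) : dir (α + π) = -dir α := by
  ext i; fin_cases i <;> simp [dir]

theorem exists_eq_norm_smul_dir (w : ℝ²) : ∃ θ, w = ‖w‖ • dir θ := by
  set c : ℂ := ⟨w 0, w 1⟩
  have hc : ‖c‖ = ‖w‖ := by
    rw [Complex.norm_def, Complex.normSq_apply, EuclideanSpace.norm_eq, Fin.sum_univ_two]
    simp [c, sq]
  refine ⟨c.arg, ?_⟩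
  ext i; fin_cases i
  · simp [dir, ← hc, Complex.norm_mul_cos_arg, c]
  · simp [dir, ← hc, Complex.norm_mul_sin_arg, c]

theorem lineSet_eq (α t : ℝ) : lineSet α t = {x | ⟪x, dir α⟫ = t} := by
  simp only [lineSet, inner_dir]

noncomputable def posLength (lo hi : ℝ) : ℝ := max (hi - max lo 0) 0

theorem volume_Icc_inter_Ioi (lo hi : ℝ) :
    volume (Icc lo hi ∩ Ioi 0) = ENNReal.ofReal (posLength lo hi) := by
  have hIci : Icc lo hi ∩ Ici 0 = Icc (max lo 0) hi := by
    ext; simp only [mem_inter_iff, mem_Icc, mem_Ici, max_le_iff]; tauto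
  rw [measure_congr ((ae_eq_refl _).inter Ioi_ae_eq_Ici), hIci, Real.volume_Icc,
    posLength, ENNReal.ofReal_max, ENNReal.ofReal_zero, max_eq_left (zero_le (α := ENNReal))]

theorem posLength_add_posLength_neg (lo hi : ℝ) :
    posLength lo hi + posLength (-hi) (-lo) = max (hi - lo) 0 := by
  simp only [posLength]
  rcases le_total lo 0 with h | h <;> rcases le_total hi 0 with h' | h' <;>
    simp [max_def] <;> split_ifs <;> linarith

noncomputable def overlapLength (a r b s : ℝ) : ℝ :=
  max (min (a + r) (b + s) - max (a - r) (b - s)) 0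

theorem overlapLength_sub (a r b s : ℝ) : overlapLength a r b s = overlapLength 0 r (b - a) s := by
  have hmin : min (a + r) (b + s) = a + min (0 + r) (b - a + s) := by
    rw [← min_add_add_left]; ring_nf
  have hmax : max (a - r) (b - s) = a + max (0 - r) (b - a - s) := by
    rw [← max_add_add_left]; ring_nf
  rw [overlapLength, overlapLength, hmin, hmax, add_sub_add_left_eq_sub]

theorem overlapLength_zero_neg (r x s : ℝ) : overlapLength 0 r (-x) s = overlapLength 0 r x s := by
  have hmin : min (0 + r) (-x + s) = -max (0 - r) (x - s) := by
    rw [← min_neg_neg]; ring_nf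
  have hmax : max (0 - r) (-x - s) = -min (0 + r) (x + s) := by
    rw [← max_neg_neg]; ring_nf
  rw [overlapLength, overlapLength, hmin, hmax]
  ring_nf

section Crossing

variable (z₁ z₂ : ℝ²) (r₁ r₂ : ℝ)

noncomputable def crossingLength (α : ℝ) : ℝ :=
  posLength (max (⟪z₁, dir α⟫ - r₁) (⟪z₂, dir α⟫ - r₂)) (min (⟪z₁, dir α⟫ + r₁) (⟪z₂, dir α⟫ + r₂))

theorem setOf_lineSet_inter_closedBall_nonempty (α : ℝ) :
    {t | (lineSet α t ∩ closedBall z₁ r₁).Nonempty ∧ (lineSet α t ∩ closedBall z₂ r₂).Nonempty}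
      = Icc (max (⟪z₁, dir α⟫ - r₁) (⟪z₂, dir α⟫ - r₂))
          (min (⟪z₁, dir α⟫ + r₁) (⟪z₂, dir α⟫ + r₂)) := by
  ext t
  simp only [lineSet_eq, setOf_inner_eq_inter_closedBall_nonempty_iff (norm_dir α), ← Icc_inter_Icc,
    ← Real.closedBall_eq_Icc, mem_ofPred_eq, mem_inter_iff, mem_closedBall, Real.dist_eq,
    abs_sub_comm t]

theorem lineMeas₂_closedBall_eq_lintegral :
    lineMeas₂ (closedBall z₁ r₁) (closedBall z₂ r₂)
      = ∫⁻ α in Ico 0 (2 * π), ENNReal.ofReal (crossingLength z₁ z₂ r₁ r₂ α) := by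
  refine lintegral_congr fun α => ?_
  rw [setOf_lineSet_inter_closedBall_nonempty, lintegral_indicator measurableSet_Icc,
    setLIntegral_one, Measure.restrict_apply measurableSet_Icc, volume_Icc_inter_Ioi, crossingLength]

theorem continuous_crossingLength : Continuous (crossingLength z₁ z₂ r₁ r₂) := by
  unfold crossingLength posLength
  simp only [inner_dir]
  fun_prop

theorem crossingLength_nonneg (α : ℝ) : 0 ≤ crossingLength z₁ z₂ r₁ r₂ α := le_max_right _ _

theorem crossingLength_add_crossingLength_add_pi (α : ℝ) :
    crossingLength z₁ z₂ r₁ r₂ α + crossingLength z₁ z₂ r₁ r₂ (α + π)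
      = overlapLength 0 r₁ ⟪z₂ - z₁, dir α⟫ r₂ := by
  set a := ⟪z₁, dir α⟫
  set b := ⟪z₂, dir α⟫
  have hlo : max (-a - r₁) (-b - r₂) = -min (a + r₁) (b + r₂) := by rw [← max_neg_neg]; ring_nf
  have hhi : min (-a + r₁) (-b + r₂) = -max (a - r₁) (b - r₂) := by rw [← min_neg_neg]; ring_nf
  rw [crossingLength, crossingLength, dir_add_pi, inner_neg_right, inner_neg_right, hlo, hhi,
    posLength_add_posLength_neg, inner_sub_left, ← overlapLength_sub, overlapLength]

end Crossing

theorem setLIntegral_Ico_ofReal {G : ℝ → ℝ} (hG : Continuous G) (hG₀ : ∀ x, 0 ≤ G x) {a b : ℝ}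
    (hab : a ≤ b) :
    ∫⁻ x in Ico a b, ENNReal.ofReal (G x) = ENNReal.ofReal (∫ x in a..b, G x) := by
  rw [integral_of_le hab, ofReal_integral_eq_lintegral_ofReal hG.integrableOn_Ioc
    (ae_of_all _ hG₀)]
  exact setLIntegral_congr Ico_ae_eq_Ioc

theorem integral_zero_two_mul_eq_integral_add {G : ℝ → ℝ} (hG : Continuous G) (T : ℝ) :
    ∫ x in 0..2 * T, G x = ∫ x in 0..T, (G x + G (x + T)) := by
  have hGT : Continuous fun x => G (x + T) := by fun_prop
  rw [integral_add (hG.intervalIntegrable _ _) (hGT.intervalIntegrable _ _),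
    integral_comp_add_right, zero_add, ← two_mul,
    integral_add_adjacent_intervals (hG.intervalIntegrable _ _) (hG.intervalIntegrable _ _)]

theorem integral_comp_cos_sub {g : ℝ → ℝ} (hg : Continuous g) (hg_even : ∀ x, g (-x) = g x)
    (θ : ℝ) : ∫ α in 0..π, g (cos (α - θ)) = 2 * ∫ α in 0..π / 2, g (cos α) := by
  have hF : Continuous fun α => g (cos α) := by fun_prop
  have hper : Function.Periodic (fun α => g (cos α)) π := fun α => by simp [cos_add_pi, hg_even]
  have hsymm : ∫ α in π / 2..π, g (cos α) = ∫ α in 0..π / 2, g (cos α) := by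
    have := integral_comp_sub_left (fun α => g (cos α)) π (a := 0) (b := π / 2)
    simp only [cos_pi_sub, hg_even, sub_zero] at this
    rw [this]; congr 1; ring
  calc ∫ α in 0..π, g (cos (α - θ)) = ∫ α in -θ..-θ + π, g (cos α) := by
        rw [integral_comp_sub_right (fun α => g (cos α)), zero_sub, sub_eq_neg_add]
    _ = ∫ α in 0..0 + π, g (cos α) := hper.intervalIntegral_add_eq (-θ) 0
    _ = (∫ α in 0..π / 2, g (cos α)) + ∫ α in π / 2..π, g (cos α) := by
        rw [zero_add, integral_add_adjacent_intervals (hF.intervalIntegrable _ _)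
          (hF.intervalIntegrable _ _)]
    _ = 2 * ∫ α in 0..π / 2, g (cos α) := by rw [hsymm]; ring

theorem le_mul_cos_of_le_arccos {a h β : ℝ} (hh : 0 < h) (ha₁ : -h ≤ a) (ha₂ : a ≤ h)
    (hβ₀ : 0 ≤ β) (hβ : β ≤ arccos (a / h)) : a ≤ h * cos β := by
  have hcos := cos_le_cos_of_nonneg_of_le_pi hβ₀ (arccos_le_pi _) hβ
  rwa [cos_arccos (by rwa [le_div_iff₀ hh, neg_one_mul]) ((div_le_one hh).2 ha₂),
    div_le_iff₀' hh] at hcos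

theorem mul_cos_le_of_arccos_le {a h β : ℝ} (hh : 0 < h) (ha₁ : -h ≤ a) (ha₂ : a ≤ h)
    (hβ : arccos (a / h) ≤ β) (hβπ : β ≤ π) : h * cos β ≤ a := by
  have hcos := cos_le_cos_of_nonneg_of_le_pi (arccos_nonneg _) hβπ hβ
  rwa [cos_arccos (by rwa [le_div_iff₀ hh, neg_one_mul]) ((div_le_one hh).2 ha₂),
    le_div_iff₀' hh] at hcos

section Chord

variable {r₁ r₂ x : ℝ}

theorem overlapLength_zero_of_add_le (hx : r₁ + r₂ ≤ x) : overlapLength 0 r₁ x r₂ = 0 :=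
  max_eq_right (by linarith [min_le_left (0 + r₁) (x + r₂), le_max_right (0 - r₁) (x - r₂)])

theorem overlapLength_zero_of_sub_le_of_le_add (hr : r₂ ≤ r₁) (hx₁ : r₁ - r₂ ≤ x)
    (hx₂ : x ≤ r₁ + r₂) : overlapLength 0 r₁ x r₂ = r₁ + r₂ - x := by
  rw [overlapLength, min_eq_left (show 0 + r₁ ≤ x + r₂ by linarith),
    max_eq_right (show 0 - r₁ ≤ x - r₂ by linarith), max_eq_left (by linarith)]
  ring

theorem overlapLength_zero_of_nonneg_of_le_sub (hr₂ : 0 ≤ r₂) (hx₀ : 0 ≤ x)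
    (hx : x ≤ r₁ - r₂) : overlapLength 0 r₁ x r₂ = 2 * r₂ := by
  rw [overlapLength, min_eq_right (show x + r₂ ≤ 0 + r₁ by linarith),
    max_eq_right (show 0 - r₁ ≤ x - r₂ by linarith), max_eq_left (by linarith)]
  ring

variable {h : ℝ}

theorem integral_overlapLength_mul_cos_zero_arccos (hh : 0 < h) (hr : 0 ≤ r₁ + r₂)
    (hrh : r₁ + r₂ ≤ h) :
    ∫ β in 0..arccos ((r₁ + r₂) / h), overlapLength 0 r₁ (h * cos β) r₂ = 0 := by
  refine (integral_congr fun β hβ => overlapLength_zero_of_add_le ?_).trans integral_zero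
  rw [uIcc_of_le (arccos_nonneg _)] at hβ
  exact le_mul_cos_of_le_arccos hh (by linarith) hrh hβ.1 hβ.2

theorem integral_overlapLength_mul_cos_arccos_arccos (hh : 0 < h) (hr₂ : 0 ≤ r₂) (hr : r₂ ≤ r₁)
    (hrh : r₁ + r₂ ≤ h) :
    ∫ β in arccos ((r₁ + r₂) / h)..arccos ((r₁ - r₂) / h), overlapLength 0 r₁ (h * cos β) r₂
      = (r₁ + r₂) * (arccos ((r₁ - r₂) / h) - arccos ((r₁ + r₂) / h))
        - h * (sin (arccos ((r₁ - r₂) / h)) - sin (arccos ((r₁ + r₂) / h))) := by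
  have hmono : arccos ((r₁ + r₂) / h) ≤ arccos ((r₁ - r₂) / h) :=
    arccos_le_arccos (by gcongr; linarith)
  rw [integral_congr (g := fun β => r₁ + r₂ - h * cos β) fun β hβ => ?_]
  · have hcos : Continuous fun β => h * cos β := by fun_prop
    rw [intervalIntegral.integral_sub intervalIntegrable_const (hcos.intervalIntegrable _ _),
      intervalIntegral.integral_const, intervalIntegral.integral_const_mul, integral_cos,
      smul_eq_mul]
    ring
  · rw [uIcc_of_le hmono] at hβ
    exact overlapLength_zero_of_sub_le_of_le_add hr
      (le_mul_cos_of_le_arccos hh (by linarith) (by linarith)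
        ((arccos_nonneg _).trans hβ.1) hβ.2)
      (mul_cos_le_of_arccos_le hh (by linarith) hrh hβ.1 (hβ.2.trans (arccos_le_pi _)))

theorem integral_overlapLength_mul_cos_arccos_pi_div_two (hh : 0 < h) (hr₂ : 0 ≤ r₂)
    (hr : r₂ ≤ r₁) (hrh : r₁ - r₂ ≤ h) :
    ∫ β in arccos ((r₁ - r₂) / h)..π / 2, overlapLength 0 r₁ (h * cos β) r₂
      = (π / 2 - arccos ((r₁ - r₂) / h)) * (2 * r₂) := by
  have hle : arccos ((r₁ - r₂) / h) ≤ π / 2 :=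
    arccos_le_pi_div_two.2 (div_nonneg (by linarith) hh.le)
  rw [integral_congr (g := fun _ => 2 * r₂) fun β hβ => ?_, intervalIntegral.integral_const,
    smul_eq_mul]
  rw [uIcc_of_le hle] at hβ
  have hβ₀ : 0 ≤ β := (arccos_nonneg _).trans hβ.1
  exact overlapLength_zero_of_nonneg_of_le_sub hr₂
    (mul_nonneg hh.le (cos_nonneg_of_mem_Icc ⟨by linarith [pi_pos], hβ.2⟩))
    (mul_cos_le_of_arccos_le hh (by linarith) hrh hβ.1 (by linarith [pi_pos, hβ.2]))

theorem integral_overlapLength_mul_cos (hr₂ : 0 ≤ r₂) (hr : r₂ ≤ r₁) (hrh : r₁ + r₂ < h) :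
    ∫ β in 0..π / 2, overlapLength 0 r₁ (h * cos β) r₂ = f r₁ r₂ h := by
  have hh : 0 < h := by linarith
  have hF : Continuous fun β => overlapLength 0 r₁ (h * cos β) r₂ := by
    unfold overlapLength; fun_prop
  rw [← integral_add_adjacent_intervals (hF.intervalIntegrable 0 (arccos ((r₁ + r₂) / h)))
      (hF.intervalIntegrable _ (π / 2)),
    ← integral_add_adjacent_intervals (hF.intervalIntegrable _ (arccos ((r₁ - r₂) / h)))
      (hF.intervalIntegrable _ (π / 2)),
    integral_overlapLength_mul_cos_zero_arccos hh (by linarith) hrh.le,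
    integral_overlapLength_mul_cos_arccos_arccos hh hr₂ hr hrh.le,
    integral_overlapLength_mul_cos_arccos_pi_div_two hh hr₂ hr (by linarith),
    sin_arccos, sin_arccos, arccos_eq_pi_div_two_sub_arcsin, arccos_eq_pi_div_two_sub_arcsin, f]
  ring

end Chord

/-- The measure of the set of lines meeting two disjoint discs `B(z₁,r₁)` and `B(z₂,r₂)`
equals `2 f(r₁, r₂, |z₂ − z₁|)`. -/
theorem lineMeas₂_two_discs (z₁ z₂ : EuclideanSpace ℝ (Fin 2)) (r₁ r₂ : ℝ)
    (h₂ : 0 < r₂) (h₁₂ : r₂ ≤ r₁) (hdist : r₁ + r₂ < dist z₂ z₁) :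
    lineMeas₂ (Metric.closedBall z₁ r₁) (Metric.closedBall z₂ r₂)
      = ENNReal.ofReal (2 * f r₁ r₂ (dist z₂ z₁)) := by
  obtain ⟨θ, hθ⟩ := exists_eq_norm_smul_dir (z₂ - z₁)
  rw [← dist_eq_norm] at hθ
  have hG := continuous_crossingLength z₁ z₂ r₁ r₂
  have hg : Continuous fun x => overlapLength 0 r₁ (dist z₂ z₁ * x) r₂ := by
    unfold overlapLength; fun_prop
  rw [lineMeas₂_closedBall_eq_lintegral,
    setLIntegral_Ico_ofReal hG (crossingLength_nonneg z₁ z₂ r₁ r₂) two_pi_pos.le,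
    integral_zero_two_mul_eq_integral_add hG]
  simp_rw [crossingLength_add_crossingLength_add_pi, hθ, real_inner_smul_left, inner_dir_dir]
  rw [integral_comp_cos_sub hg (fun x => by rw [mul_neg, overlapLength_zero_neg]) θ,
    integral_overlapLength_mul_cos h₂.le h₁₂ hdist]
end

section
/- For fixed r₁ ≥ r₂ > 0, the function h ↦ f(r₁,r₂,h) defined for h > r₁ + r₂ by f(r₁,r₂,h) = (r₁+r₂)·arcsin((r₁+r₂)/h) − (r₁−r₂)·arcsin((r₁−r₂)/h) − h·(√(1 − ((r₁−r₂)/h)²) − √(1 − ((r₁+r₂)/h)²)) is positive, strictly decreasing, and tends to 0 as h → ∞. -/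
open Real Set Filter

/-!
`t ↦ t arcsin (t/h) + h √(1 - (t/h)²)` is an antiderivative of `t ↦ arcsin (t/h)` on `[-h, h]`,
so `f r₁ r₂ h = ∫_{r₁-r₂}^{r₁+r₂} arcsin (t/h) dt`. On this interval the integrand is positive and
strictly decreasing in `h`, and the integral tends to `0` because `s ↦ ∫ arcsin (t s) dt` is
continuous and vanishes at `s = 0`.
-/

open MeasureTheory intervalIntegral

lemma hasDerivAt_mul_arcsin_div_add_mul_sqrt {h t : ℝ} (ht : |t| < h) :
    HasDerivAt (fun s => s * arcsin (s / h) + h * √(1 - (s / h) ^ 2)) (arcsin (t / h)) t := by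
  have hh : 0 < h := (abs_nonneg t).trans_lt ht
  have hx : |t / h| < 1 := by rwa [abs_div, abs_of_pos hh, div_lt_one hh]
  obtain ⟨hx₁, hx₂⟩ := abs_lt.1 hx
  have hu : 0 < 1 - (t / h) ^ 2 := by nlinarith
  have hdiv : HasDerivAt (fun s => s / h) (1 / h) t := by
    simpa using (hasDerivAt_id t).div_const h
  have harcsin : HasDerivAt (fun s => arcsin (s / h)) (1 / √(1 - (t / h) ^ 2) * (1 / h)) t :=
    (hasDerivAt_arcsin (by linarith) (by linarith)).comp t hdiv
  have hsqrt : HasDerivAt (fun s => √(1 - (s / h) ^ 2))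
      (-(2 * (t / h) * (1 / h)) / (2 * √(1 - (t / h) ^ 2))) t :=
    HasDerivAt.sqrt (by simpa using (hdiv.pow 2).const_sub 1) hu.ne'
  have hsum : HasDerivAt (fun s => s * arcsin (s / h) + h * √(1 - (s / h) ^ 2)) _ t :=
    ((hasDerivAt_id t).mul harcsin).add (hsqrt.const_mul h)
  convert hsum using 1
  have hs : √(1 - (t / h) ^ 2) ≠ 0 := by positivity
  simp only [id]
  field_simp
  ring

lemma integral_arcsin_div {h a b : ℝ} (hb : -h ≤ b) (hba : b ≤ a) (ha : a ≤ h) :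
    ∫ t in b..a, arcsin (t / h) =
      (a * arcsin (a / h) + h * √(1 - (a / h) ^ 2)) -
        (b * arcsin (b / h) + h * √(1 - (b / h) ^ 2)) := by
  refine integral_eq_sub_of_hasDerivAt_of_le
    (f := fun s => s * arcsin (s / h) + h * √(1 - (s / h) ^ 2))
    hba (Continuous.continuousOn (by fun_prop)) (fun t ht => ?_)
    (Continuous.intervalIntegrable (by fun_prop) _ _)
  exact hasDerivAt_mul_arcsin_div_add_mul_sqrt (abs_lt.2 ⟨by linarith [ht.1], by linarith [ht.2]⟩)

lemma f_eq_integral_arcsin_div {r₁ r₂ h : ℝ} (hr₂ : 0 ≤ r₂) (hh : |r₁| + r₂ ≤ h) :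
    f r₁ r₂ h = ∫ t in (r₁ - r₂)..(r₁ + r₂), arcsin (t / h) := by
  have hr₁ := abs_le.1 (le_refl |r₁|)
  rw [integral_arcsin_div (by linarith) (by linarith) (by linarith), f]
  ring

lemma integral_arcsin_div_pos {h a b : ℝ} (hb : 0 ≤ b) (hba : b < a) (hh : 0 < h) :
    0 < ∫ t in b..a, arcsin (t / h) :=
  intervalIntegral_pos_of_pos_on (Continuous.intervalIntegrable (by fun_prop) _ _)
    (fun _ ht => arcsin_pos.2 (div_pos (hb.trans_lt ht.1) hh)) hba

lemma strictAntiOn_integral_arcsin_div {a b : ℝ} (hb : 0 ≤ b) (hba : b < a) :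
    StrictAntiOn (fun h => ∫ t in b..a, arcsin (t / h)) (Ici a) := by
  intro x hx y _ hxy
  have hx₀ : 0 < x := (hb.trans_lt hba).trans_le hx
  have hint : ∀ z, IntervalIntegrable (fun t => arcsin (t / z)) volume b a := fun _ =>
    Continuous.intervalIntegrable (by fun_prop) _ _
  rw [← sub_pos, ← integral_sub (hint x) (hint y)]
  refine intervalIntegral_pos_of_pos_on ((hint x).sub (hint y)) (fun t ht => ?_) hba
  have ht₀ : 0 < t := hb.trans_lt ht.1
  have hmem : ∀ z, x ≤ z → t / z ∈ Icc (-1) 1 := fun z hz =>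
    ⟨by linarith [div_pos ht₀ (hx₀.trans_le hz)],
      (div_le_one (hx₀.trans_le hz)).2 (ht.2.le.trans (hx.trans hz))⟩
  exact sub_pos.2 (strictMonoOn_arcsin (hmem y hxy.le) (hmem x le_rfl)
    (div_lt_div_of_pos_left ht₀ hx₀ hxy))

lemma tendsto_integral_arcsin_div_atTop (a b : ℝ) :
    Tendsto (fun h => ∫ t in b..a, arcsin (t / h)) atTop (nhds 0) := by
  have hcont : Continuous fun s => ∫ t in b..a, arcsin (t * s) :=
    continuous_parametric_intervalIntegral_of_continuous' (by fun_prop) b a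
  simpa [Function.comp_def, div_eq_mul_inv] using (hcont.tendsto 0).comp tendsto_inv_atTop_zero

/-- For fixed `r₁ ≥ r₂ > 0`, the function `h ↦ f(r₁,r₂,h)` on `(r₁+r₂, ∞)` is
positive, strictly decreasing, and tends to `0` as `h → ∞`. -/
theorem f_pos_strictAnti_tendsto_zero (r₁ r₂ : ℝ) (h₂ : 0 < r₂) (h₁₂ : r₂ ≤ r₁) :
    (∀ h ∈ Set.Ioi (r₁ + r₂), 0 < f r₁ r₂ h) ∧
    StrictAntiOn (fun h => f r₁ r₂ h) (Set.Ioi (r₁ + r₂)) ∧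
    Tendsto (fun h => f r₁ r₂ h) atTop (nhds 0) := by
  have hb : 0 ≤ r₁ - r₂ := by linarith
  have hba : r₁ - r₂ < r₁ + r₂ := by linarith
  have hf : EqOn (fun h => ∫ t in (r₁ - r₂)..(r₁ + r₂), arcsin (t / h)) (f r₁ r₂)
      (Ioi (r₁ + r₂)) := fun h hh =>
    (f_eq_integral_arcsin_div h₂.le (by rw [abs_of_nonneg (by linarith)]; exact le_of_lt hh)).symm
  refine ⟨fun h hh => ?_, ?_, ?_⟩
  · rw [← hf hh]
    exact integral_arcsin_div_pos hb hba (by linarith [mem_Ioi.1 hh])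
  · exact ((strictAntiOn_integral_arcsin_div hb hba).mono Ioi_subset_Ici_self).congr hf
  · exact (tendsto_integral_arcsin_div_atTop _ _).congr'
      (eventually_gt_atTop (r₁ + r₂) |>.mono fun _ hh => hf hh)
end
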